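/- Let S be a strongly ℤ^k-graded unital ring with grading 𝒜 : (Fin k → ℤ) → AddSubgroup S (for all v, w, every element of 𝒜 (v+w) is a finite sum of products of elements of 𝒜 v and 𝒜 w), and let R = S_+ be its positive subring. Let f_1, ..., f_ℓ ∈ S and suppose there exists a non-zero g ∈ S such that f_j * r * g = 0 for all j and all r ∈ R. Then there exists a non-zero h ∈ 𝒜 0 such that f_j * r * h = 0 for all j and all r ∈ R. -/

import Mathlib

/-- `s` belongs to the positive subring `S₊` of the `ℤ^k`-graded ring `S`: all of its
non-zero homogeneous components have degree in `ℕ^k` (all coordinates non-negative). -/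
def MemPositiveSubring {k : ℕ} {S : Type*} [Ring S]
    (𝒜 : (Fin k → ℤ) → AddSubgroup S) [GradedRing 𝒜] (s : S) : Prop :=
  ∀ v : Fin k → ℤ, (DirectSum.decompose 𝒜 s v : S) ≠ 0 → ∀ i : Fin k, 0 ≤ v i

/-!
Call a set `F` *eventually annihilated* if some `g ≠ 0` and some degree `D` satisfy
`f * r * g = 0` for all `f ∈ F` and all homogeneous `r` of degree `≥ D` coordinatewise; the
hypothesis says this of the `f j` with `D = 0`. The property passes from `f ∈ F` to its
homogeneous components. Order degrees lexicographically and let `f_U`, `g_M` be the top components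
of `f` and `g`. If some homogeneous `a` kills `g_M` but not `g`, replace `g` by `a * g`, whose
support is smaller. Otherwise, since `f_U * r * g_M` is the top component of `f * r * g = 0`, the
homogeneous element `a = f_U * r` kills `g`; so `f_U`, hence also `f - f_U`, is annihilated, and we
induct on the support of `f`.

For homogeneous `f` the condition passes from `g` to any non-zero component `g_v`. Strong grading
gives `y` of degree `E = max D 0` with `y * g_v ≠ 0`, and then `c` of degree `-(E + v)` with
`h = y * g_v * c ≠ 0`; this `h` has degree `0`, and `f * r * h = f * (r * y) * g_v * c = 0` for
every `r` of degree `≥ 0`.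
-/

open DirectSum

section StrongGrading

variable {S : Type*} [Ring S] {A B : Set S}

theorem exists_mem_mul_ne_zero_of_one_mem_closure
    (h1 : (1 : S) ∈ AddSubmonoid.closure {p | ∃ a ∈ A, ∃ b ∈ B, p = a * b})
    {x : S} (hx : x ≠ 0) : ∃ b ∈ B, b * x ≠ 0 := by
  by_contra! h
  have hle : AddSubmonoid.closure {p | ∃ a ∈ A, ∃ b ∈ B, p = a * b}
      ≤ (AddMonoidHom.mulRight x).ker.toAddSubmonoid :=
    AddSubmonoid.closure_le.2 <| by
      rintro _ ⟨a, -, b, hb, rfl⟩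
      simp [mul_assoc, h b hb]
  exact hx (by simpa using hle h1)

theorem exists_mul_mem_ne_zero_of_one_mem_closure
    (h1 : (1 : S) ∈ AddSubmonoid.closure {p | ∃ a ∈ A, ∃ b ∈ B, p = a * b})
    {x : S} (hx : x ≠ 0) : ∃ a ∈ A, x * a ≠ 0 := by
  by_contra! h
  have hle : AddSubmonoid.closure {p | ∃ a ∈ A, ∃ b ∈ B, p = a * b}
      ≤ (AddMonoidHom.mulLeft x).ker.toAddSubmonoid :=
    AddSubmonoid.closure_le.2 <| by
      rintro _ ⟨a, ha, b, -, rfl⟩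
      simp [← mul_assoc, h a ha]
  exact hx (by simpa using hle h1)

end StrongGrading

section Graded

variable {k : ℕ} {S : Type*} [Ring S] (𝒜 : (Fin k → ℤ) → AddSubgroup S) [GradedRing 𝒜]

theorem memPositiveSubring_of_mem {d : Fin k → ℤ} (hd : 0 ≤ d) {r : S} (hr : r ∈ 𝒜 d) :
    MemPositiveSubring 𝒜 r := by
  intro v hv i
  obtain rfl : d = v := by
    by_contra hne
    exact hv (decompose_of_mem_ne 𝒜 hr hne)
  exact hd i

theorem coe_decompose_mul_of_left_mem {a : S} {e : Fin k → ℤ} (ha : a ∈ 𝒜 e) (y : S)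
    (p : Fin k → ℤ) : (decompose 𝒜 (a * y) p : S) = a * decompose 𝒜 y (p - e) := by
  have := coe_decompose_mul_add_of_left_mem (𝒜 := 𝒜) (j := p - e) (b := y) ha
  rwa [add_sub_cancel] at this

theorem coe_decompose_sub_coe_decompose_self (f : S) (U p : Fin k → ℤ) :
    (decompose 𝒜 (f - decompose 𝒜 f U) p : S) =
      if p = U then 0 else (decompose 𝒜 f p : S) := by
  rw [decompose_sub, decompose_coe, DirectSum.sub_apply]
  split_ifs with h
  · subst h
    rw [of_eq_same, sub_self, ZeroMemClass.coe_zero]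
  · rw [of_eq_of_ne _ _ _ h, sub_zero]

end Graded

section Annihilator

variable {k : ℕ} {S : Type*} [Ring S] (𝒜 : (Fin k → ℤ) → AddSubgroup S)

def annihilatorFrom (D : Fin k → ℤ) (g : S) : AddSubgroup S where
  carrier := {f | ∀ d, D ≤ d → ∀ r ∈ 𝒜 d, f * r * g = 0}
  add_mem' hf hf' d hd r hr := by simp [add_mul, hf d hd r hr, hf' d hd r hr]
  zero_mem' := by simp
  neg_mem' hf d hd r hr := by simp [hf d hd r hr]

variable {𝒜}

theorem annihilatorFrom_mono {D D' : Fin k → ℤ} (h : D ≤ D') (g : S) :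
    annihilatorFrom 𝒜 D g ≤ annihilatorFrom 𝒜 D' g :=
  fun _ hf d hd => hf d (h.trans hd)

theorem annihilatorFrom_le_mul_right (D : Fin k → ℤ) (g c : S) :
    annihilatorFrom 𝒜 D g ≤ annihilatorFrom 𝒜 D (g * c) :=
  fun f hf d hd r hr => by rw [← mul_assoc, hf d hd r hr, zero_mul]

variable [GradedRing 𝒜]

theorem annihilatorFrom_le_mul_left_of_mem {a : S} {e : Fin k → ℤ} (ha : a ∈ 𝒜 e)
    (D : Fin k → ℤ) (g : S) :
    annihilatorFrom 𝒜 D g ≤ annihilatorFrom 𝒜 (D - e) (a * g) :=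
  fun f hf d hd r hr => by
    rw [← mul_assoc, mul_assoc f r a]
    exact hf _ (sub_le_iff_le_add.1 hd) _ (SetLike.mul_mem_graded hr ha)

theorem mem_annihilatorFrom_decompose {f g : S} {u D : Fin k → ℤ} (hf : f ∈ 𝒜 u)
    (hfg : f ∈ annihilatorFrom 𝒜 D g) (v : Fin k → ℤ) :
    f ∈ annihilatorFrom 𝒜 D (decompose 𝒜 g v) := fun d hd r hr => by
  have := coe_decompose_mul_add_of_left_mem (𝒜 := 𝒜) (j := v) (b := g)
    (SetLike.mul_mem_graded hf hr)
  rwa [hfg d hd r hr, decompose_zero, DirectSum.zero_apply, ZeroMemClass.coe_zero,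
    eq_comm] at this

theorem mul_mul_eq_zero_of_mem_annihilatorFrom_zero {f h r : S}
    (hf : f ∈ annihilatorFrom 𝒜 0 h) (hr : MemPositiveSubring 𝒜 r) : f * r * h = 0 := by
  classical
  rw [← sum_support_decompose 𝒜 r, Finset.mul_sum, Finset.sum_mul]
  refine Finset.sum_eq_zero fun d hd => hf d (fun i => hr d ?_ i) _ (SetLike.coe_mem _)
  exact fun h0 => DFinsupp.mem_support_iff.1 hd (ZeroMemClass.coe_eq_zero.1 h0)

end Annihilator

section Support

variable {k : ℕ} {S : Type*} [Ring S] {𝒜 : (Fin k → ℤ) → AddSubgroup S} [GradedRing 𝒜]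
variable [∀ (i : Fin k → ℤ) (x : 𝒜 i), Decidable (x ≠ 0)]

theorem mem_support_decompose_iff {x : S} {p : Fin k → ℤ} :
    p ∈ (decompose 𝒜 x).support ↔ (decompose 𝒜 x p : S) ≠ 0 :=
  DFinsupp.mem_support_iff.trans ZeroMemClass.coe_eq_zero.not.symm

theorem support_decompose_nonempty {x : S} (hx : x ≠ 0) : (decompose 𝒜 x).support.Nonempty :=
  Finset.nonempty_iff_ne_empty.2 fun h =>
    hx ((decompose 𝒜).injective (by rw [DFinsupp.support_eq_empty.1 h, decompose_zero]))

theorem support_decompose_sub_coe_decompose_self (f : S) (U : Fin k → ℤ) :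
    (decompose 𝒜 (f - decompose 𝒜 f U)).support = (decompose 𝒜 f).support.erase U := by
  ext p
  rw [Finset.mem_erase, mem_support_decompose_iff, mem_support_decompose_iff,
    coe_decompose_sub_coe_decompose_self]
  split_ifs with h <;> simp [h]

theorem card_support_decompose_mul_lt {a g : S} {e M : Fin k → ℤ} (ha : a ∈ 𝒜 e)
    (hM : M ∈ (decompose 𝒜 g).support) (haM : a * decompose 𝒜 g M = 0) :
    (decompose 𝒜 (a * g)).support.card < (decompose 𝒜 g).support.card := by
  have hsub : (decompose 𝒜 (a * g)).support ⊆
      ((decompose 𝒜 g).support.erase M).image (e + ·) := by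
    intro p hp
    rw [mem_support_decompose_iff, coe_decompose_mul_of_left_mem 𝒜 ha] at hp
    refine Finset.mem_image.2 ⟨p - e, Finset.mem_erase.2 ⟨?_, ?_⟩, add_sub_cancel _ _⟩
    · rintro rfl
      exact hp haM
    · exact mem_support_decompose_iff.2 fun h0 => hp (by rw [h0, mul_zero])
  calc (decompose 𝒜 (a * g)).support.card
      ≤ (((decompose 𝒜 g).support.erase M).image (e + ·)).card := Finset.card_le_card hsub
    _ ≤ ((decompose 𝒜 g).support.erase M).card := Finset.card_image_le
    _ < (decompose 𝒜 g).support.card := Finset.card_erase_lt_of_mem hM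

theorem toLex_le_of_mem_support_decompose_mul {a y : S} {e M : Fin k → ℤ} (ha : a ∈ 𝒜 e)
    (hM : ∀ w ∈ (decompose 𝒜 y).support, toLex w ≤ toLex M) :
    ∀ p ∈ (decompose 𝒜 (a * y)).support, toLex p ≤ toLex (e + M) := by
  intro p hp
  rw [mem_support_decompose_iff, coe_decompose_mul_of_left_mem 𝒜 ha] at hp
  have hpe := hM (p - e) (mem_support_decompose_iff.2 fun h0 => hp (by rw [h0, mul_zero]))
  calc toLex p = toLex e + toLex (p - e) := by rw [← toLex_add, add_sub_cancel]
    _ ≤ toLex e + toLex M := add_le_add_right hpe _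
    _ = toLex (e + M) := (toLex_add e M).symm

theorem coe_decompose_mul_of_forall_toLex_le {x y : S} {U M : Fin k → ℤ}
    (hU : ∀ u ∈ (decompose 𝒜 x).support, toLex u ≤ toLex U)
    (hM : ∀ w ∈ (decompose 𝒜 y).support, toLex w ≤ toLex M) :
    (decompose 𝒜 (x * y) (U + M) : S) = decompose 𝒜 x U * decompose 𝒜 y M := by
  rw [decompose_mul, coe_mul_apply]
  refine (Finset.sum_eq_single (U, M) ?_ ?_).trans rfl
  · rintro ⟨u, w⟩ huw hne
    simp only [Finset.mem_filter, Finset.mem_product] at huw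
    obtain ⟨⟨hu, hw⟩, hsum⟩ := huw
    have := (add_eq_add_iff_eq_and_eq (hU u hu) (hM w hw)).1
      (by rw [← toLex_add, ← toLex_add, hsum])
    simp_all
  · intro hUM
    simp only [Finset.mem_filter, Finset.mem_product, and_true, not_and_or,
      DFinsupp.mem_support_iff, not_not] at hUM
    rcases hUM with h | h <;> simp [h]

theorem decompose_mul_mul_decompose_eq_zero {f r g : S} {d U M : Fin k → ℤ} (hr : r ∈ 𝒜 d)
    (h0 : f * r * g = 0) (hU : ∀ u ∈ (decompose 𝒜 f).support, toLex u ≤ toLex U)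
    (hM : ∀ w ∈ (decompose 𝒜 g).support, toLex w ≤ toLex M) :
    decompose 𝒜 f U * r * decompose 𝒜 g M = 0 := by
  have := coe_decompose_mul_of_forall_toLex_le hU (toLex_le_of_mem_support_decompose_mul hr hM)
  rwa [← mul_assoc, h0, decompose_zero, DirectSum.zero_apply, ZeroMemClass.coe_zero,
    coe_decompose_mul_of_left_mem 𝒜 hr, add_sub_cancel_left, ← mul_assoc, eq_comm] at this

end Support

section

variable {k : ℕ} {S : Type*} [Ring S] (𝒜 : (Fin k → ℤ) → AddSubgroup S)

def EventuallyAnnihilated (F : Set S) : Prop :=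
  ∃ D, ∃ g ≠ 0, F ⊆ annihilatorFrom 𝒜 D g

variable {𝒜} {F F' : Set S}

namespace EventuallyAnnihilated

theorem mono (hF : EventuallyAnnihilated 𝒜 F) (h : F' ⊆ F) : EventuallyAnnihilated 𝒜 F' :=
  let ⟨D, g, hg, hFg⟩ := hF
  ⟨D, g, hg, h.trans hFg⟩

theorem insert_of_mem_closure (hF : EventuallyAnnihilated 𝒜 F) {x : S}
    (hx : x ∈ AddSubgroup.closure F) : EventuallyAnnihilated 𝒜 (insert x F) :=
  let ⟨D, g, hg, hFg⟩ := hF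
  ⟨D, g, hg, Set.insert_subset ((AddSubgroup.closure_le _).2 hFg hx) hFg⟩

variable [GradedRing 𝒜]

theorem insert_decompose_of_forall_toLex_le
    [∀ (i : Fin k → ℤ) (x : 𝒜 i), Decidable (x ≠ 0)] (hF : EventuallyAnnihilated 𝒜 F)
    {f : S} (hf : f ∈ F) {U : Fin k → ℤ}
    (hU : ∀ u ∈ (decompose 𝒜 f).support, toLex u ≤ toLex U) :
    EventuallyAnnihilated 𝒜 (insert (decompose 𝒜 f U : S) F) := by
  obtain ⟨D, g, hg, hFg⟩ := hF
  induction hn : (decompose 𝒜 g).support.card using Nat.strong_induction_on generalizing D g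
    with | _ n ih
  obtain ⟨M, hM, hMmax⟩ :=
    (decompose 𝒜 g).support.exists_max_image toLex (support_decompose_nonempty hg)
  by_cases hA : ∃ e, ∃ a ∈ 𝒜 e, a * decompose 𝒜 g M = 0 ∧ a * g ≠ 0
  · obtain ⟨e, a, ha, haM, hag⟩ := hA
    exact ih _ (hn ▸ card_support_decompose_mul_lt ha hM haM) (D - e) (a * g) hag
      (hFg.trans (annihilatorFrom_le_mul_left_of_mem ha D g)) rfl
  · push Not at hA
    refine ⟨D, g, hg, Set.insert_subset (fun d hd r hr => ?_) hFg⟩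
    exact hA _ _ (SetLike.mul_mem_graded (SetLike.coe_mem _) hr)
      (decompose_mul_mul_decompose_eq_zero hr (hFg hf d hd r hr) hU hMmax)

theorem union_range_decompose (hF : EventuallyAnnihilated 𝒜 F) {f : S} (hf : f ∈ F) :
    EventuallyAnnihilated 𝒜 (F ∪ Set.range fun v => (decompose 𝒜 f v : S)) := by
  classical
  induction hn : (decompose 𝒜 f).support.card using Nat.strong_induction_on generalizing f F
    with | _ n ih
  rcases (decompose 𝒜 f).support.eq_empty_or_nonempty with h0 | hne
  · refine (hF.insert_of_mem_closure (zero_mem _)).mono ?_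
    rintro _ (hx | ⟨v, rfl⟩)
    · exact Set.mem_insert_of_mem _ hx
    · simp [DFinsupp.support_eq_empty.1 h0]
  obtain ⟨U, hU, hUmax⟩ := (decompose 𝒜 f).support.exists_max_image toLex hne
  have hF' : EventuallyAnnihilated 𝒜
      (insert (f - decompose 𝒜 f U) (insert (decompose 𝒜 f U : S) F)) :=
    (hF.insert_decompose_of_forall_toLex_le hf hUmax).insert_of_mem_closure <|
      sub_mem (AddSubgroup.subset_closure (Set.mem_insert_of_mem _ hf))
        (AddSubgroup.subset_closure (Set.mem_insert _ _))
  have hlt : (decompose 𝒜 (f - decompose 𝒜 f U)).support.card < n := by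
    rw [support_decompose_sub_coe_decompose_self, ← hn]
    exact Finset.card_erase_lt_of_mem hU
  refine (ih _ hlt hF' (Set.mem_insert _ _) rfl).mono ?_
  rintro _ (hx | ⟨p, rfl⟩)
  · exact Or.inl (Set.mem_insert_of_mem _ (Set.mem_insert_of_mem _ hx))
  · by_cases hp : p = U
    · exact Or.inl (Set.mem_insert_of_mem _ (hp ▸ Set.mem_insert _ _))
    · exact Or.inr ⟨p, by simp only [coe_decompose_sub_coe_decompose_self, if_neg hp]⟩

theorem union_iUnion_range_decompose {ι : Type*} (f : ι → S)
    (hF : EventuallyAnnihilated 𝒜 (Set.range f)) (s : Finset ι) :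
    EventuallyAnnihilated 𝒜
      (Set.range f ∪ ⋃ j ∈ s, Set.range fun v => (decompose 𝒜 (f j) v : S)) := by
  classical
  induction s using Finset.induction_on with
  | empty => simpa using hF
  | insert j s _ ih =>
    refine (ih.union_range_decompose (Or.inl ⟨j, rfl⟩)).mono ?_
    rw [Finset.set_biUnion_insert]
    intro x
    simp only [Set.mem_union]
    tauto

theorem exists_degree_zero_of_forall_homogeneous
    (hstrong : ∀ v w : Fin k → ℤ, ∀ z ∈ 𝒜 (v + w),
      z ∈ AddSubmonoid.closure {p : S | ∃ x ∈ 𝒜 v, ∃ y ∈ 𝒜 w, p = x * y})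
    (hF : EventuallyAnnihilated 𝒜 F) (hhom : ∀ x ∈ F, ∃ u, x ∈ 𝒜 u) :
    ∃ h ∈ 𝒜 0, h ≠ 0 ∧ F ⊆ annihilatorFrom 𝒜 0 h := by
  classical
  have one_mem_closure (v : Fin k → ℤ) := hstrong (-v) v 1 (by
    rw [neg_add_cancel]
    exact SetLike.one_mem_graded 𝒜)
  obtain ⟨D, g, hg, hFg⟩ := hF
  obtain ⟨v, hv⟩ := support_decompose_nonempty (𝒜 := 𝒜) hg
  set E := D ⊔ 0
  obtain ⟨y, hy, hyg⟩ := exists_mem_mul_ne_zero_of_one_mem_closure (one_mem_closure E)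
    (mem_support_decompose_iff.1 hv)
  obtain ⟨c, hc, hygc⟩ :=
    exists_mul_mem_ne_zero_of_one_mem_closure (one_mem_closure (E + v)) hyg
  refine ⟨y * decompose 𝒜 g v * c, ?_, hygc, fun f hf => ?_⟩
  · have := SetLike.mul_mem_graded (SetLike.mul_mem_graded hy (decompose 𝒜 g v).2) hc
    rwa [add_neg_cancel] at this
  obtain ⟨u, hu⟩ := hhom f hf
  refine annihilatorFrom_mono (sub_nonpos.2 le_sup_left) _ <|
    annihilatorFrom_le_mul_right _ _ c <| annihilatorFrom_le_mul_left_of_mem hy D _ <|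
      mem_annihilatorFrom_decompose hu (hFg hf) v

end EventuallyAnnihilated

end

/-- Let `S` be a strongly `ℤ^k`-graded unital ring with positive subring `R = S₊`.
If `f 1, …, f ℓ ∈ S` admit a non-zero `g ∈ S` with `f j * r * g = 0` for all `j` and all
`r ∈ R`, then there is a non-zero `h ∈ 𝒜 0` with `f j * r * h = 0` for all `j` and all
`r ∈ R`. -/
theorem exists_degree_zero_annihilator_of_strongly_graded
    {k : ℕ} {S : Type*} [Ring S]
    (𝒜 : (Fin k → ℤ) → AddSubgroup S) [GradedRing 𝒜]
    (hstrong : ∀ v w : Fin k → ℤ, ∀ z ∈ 𝒜 (v + w),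
      z ∈ AddSubmonoid.closure {p : S | ∃ x ∈ 𝒜 v, ∃ y ∈ 𝒜 w, p = x * y})
    {ℓ : ℕ} (f : Fin ℓ → S) (g : S) (hg : g ≠ 0)
    (hfg : ∀ j : Fin ℓ, ∀ r : S, MemPositiveSubring 𝒜 r → f j * r * g = 0) :
    ∃ h ∈ 𝒜 (0 : Fin k → ℤ), h ≠ 0 ∧
      ∀ j : Fin ℓ, ∀ r : S, MemPositiveSubring 𝒜 r → f j * r * h = 0 := by
  classical
  have hf : EventuallyAnnihilated 𝒜 (Set.range f) := ⟨0, g, hg, by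
    rintro _ ⟨j, rfl⟩ d hd r hr
    exact hfg j r (memPositiveSubring_of_mem 𝒜 hd hr)⟩
  have hcomp :
      EventuallyAnnihilated 𝒜 (⋃ j, Set.range fun v => (decompose 𝒜 (f j) v : S)) :=
    (hf.union_iUnion_range_decompose f Finset.univ).mono fun x hx =>
      Or.inr (by simpa using hx)
  obtain ⟨h, hh, hne, hann⟩ := hcomp.exists_degree_zero_of_forall_homogeneous hstrong <| by
    simp only [Set.mem_iUnion, Set.mem_range]
    rintro _ ⟨j, v, rfl⟩
    exact ⟨v, SetLike.coe_mem _⟩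
  refine ⟨h, hh, hne, fun j r hr => mul_mul_eq_zero_of_mem_annihilatorFrom_zero ?_ hr⟩
  rw [← sum_support_decompose 𝒜 (f j)]
  exact sum_mem fun v _ => hann (Set.mem_iUnion.2 ⟨j, v, rfl⟩)
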